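/- Let V = 𝔽₂^m and for x ∈ V let E_x be the complex matrix with rows and columns indexed by V whose (g,h)-entry is 2^{−m}(−1)^{x·(g+h)}. Let a, b, c, d ∈ V with a ≠ b and c ≠ d. Then the states e_a − e_b and e_c − e_d are strongly cospectral, i.e., for every x ∈ V one has E_x(e_a − e_b) = E_x(e_c − e_d) or E_x(e_a − e_b) = −E_x(e_c − e_d), if and only if a + b + c + d = 0. -/

import Mathlib

/-!
Writing `χ u = (-1) ^ u.val` for the sign character of `𝔽₂`, every column of `E_x` is a multiple
of its zeroth column: `E_x e_a = χ(x·a) w_x` with `w_x ≠ 0`. Hence `E_x (e_a - e_b) = ± E_x (e_c - e_d)`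
says `(χ(x·a) - χ(x·b))² = (χ(x·c) - χ(x·d))²`, and since `(χ u - χ v)² = 2 - 2 χ(u + v)` this is
`x·(a + b + c + d) = 0`. This holds for all `x` exactly when `a + b + c + d = 0`.
-/

open Matrix Finset

noncomputable section

def stdBasis {G : Type*} [DecidableEq G] (a : G) : G → ℂ :=
  fun v => if v = a then 1 else 0

def Emat {m : ℕ} (x : Fin m → ZMod 2) :
    Matrix (Fin m → ZMod 2) (Fin m → ZMod 2) ℂ :=
  fun g h => (1 / 2 ^ m : ℂ) * (-1 : ℂ) ^ (x ⬝ᵥ (g + h)).val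

lemma smul_eq_or_eq_neg_smul_iff_sq_eq_sq {R M : Type*} [CommRing R] [IsDomain R]
    [AddCommGroup M] [Module R M] [Module.IsTorsionFree R M] {v : M} (hv : v ≠ 0) (s t : R) :
    (s • v = t • v ∨ s • v = -(t • v)) ↔ s ^ 2 = t ^ 2 := by
  rw [sq_eq_sq_iff_eq_or_eq_neg, ← neg_smul, (smul_left_injective R hv).eq_iff,
    (smul_left_injective R hv).eq_iff]

namespace ZMod

lemma neg_one_pow_val_add {R : Type*} [Ring R] (u v : ZMod 2) :
    (-1 : R) ^ (u + v).val = (-1) ^ u.val * (-1) ^ v.val := by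
  rw [val_add, ← neg_one_pow_eq_pow_mod_two, pow_add]

lemma neg_one_pow_val_sq {R : Type*} [Ring R] (u : ZMod 2) :
    ((-1 : R) ^ u.val) ^ 2 = 1 := by
  rw [sq, ← neg_one_pow_val_add, CharTwo.add_self_eq_zero, val_zero, pow_zero]

lemma neg_one_pow_val_injective {R : Type*} [Ring R] [NeZero (2 : R)] :
    Function.Injective fun u : ZMod 2 => (-1 : R) ^ u.val := by
  have neg_one_ne_one : (-1 : R) ≠ 1 := fun h =>
    NeZero.ne (2 : R) (one_add_one_eq_two (R := R) ▸ neg_eq_iff_add_eq_zero.mp h)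
  have zero_or_one : ∀ w : ZMod 2, w = 0 ∨ w = 1 := by decide
  intro u v huv
  rcases zero_or_one u with rfl | rfl <;> rcases zero_or_one v with rfl | rfl <;>
    simp_all [val_one, neg_one_ne_one.symm]

lemma sq_neg_one_pow_val_sub {R : Type*} [CommRing R] (u v : ZMod 2) :
    ((-1 : R) ^ u.val - (-1) ^ v.val) ^ 2 = 2 - 2 * (-1) ^ (u + v).val := by
  linear_combination (neg_one_pow_val_sq (R := R) u) + neg_one_pow_val_sq (R := R) v
    + 2 * neg_one_pow_val_add (R := R) u v

lemma sq_neg_one_pow_val_sub_eq_iff {R : Type*} [CommRing R] [IsDomain R] [NeZero (2 : R)]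
    (u v p q : ZMod 2) :
    ((-1 : R) ^ u.val - (-1) ^ v.val) ^ 2 = ((-1 : R) ^ p.val - (-1) ^ q.val) ^ 2 ↔
      u + v = p + q := by
  rw [sq_neg_one_pow_val_sub, sq_neg_one_pow_val_sub, sub_right_inj,
    mul_right_inj' (NeZero.ne (2 : R)), neg_one_pow_val_injective.eq_iff]

end ZMod

lemma stdBasis_eq_pi_single {G : Type*} [DecidableEq G] (a : G) :
    stdBasis a = Pi.single a 1 := by
  ext v
  simp [_root_.stdBasis, Pi.single_apply]

variable {m : ℕ}

lemma Emat_col (x a : Fin m → ZMod 2) :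
    (Emat x).col a = (-1 : ℂ) ^ (x ⬝ᵥ a).val • (Emat x).col 0 := by
  ext g
  simp only [col_apply, Pi.smul_apply, smul_eq_mul, Emat, add_zero, dotProduct_add,
    ZMod.neg_one_pow_val_add]
  ring

lemma Emat_col_zero_ne_zero (x : Fin m → ZMod 2) : (Emat x).col 0 ≠ 0 := by
  intro h
  simpa [Emat] using congrFun h 0

lemma Emat_mulVec_stdBasis_sub (x a b : Fin m → ZMod 2) :
    Emat x *ᵥ (stdBasis a - stdBasis b) =
      ((-1 : ℂ) ^ (x ⬝ᵥ a).val - (-1) ^ (x ⬝ᵥ b).val) • (Emat x).col 0 := by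
  rw [stdBasis_eq_pi_single, stdBasis_eq_pi_single, mulVec_sub, mulVec_single_one,
    mulVec_single_one, Emat_col, Emat_col x b, sub_smul]

lemma Emat_mulVec_eq_or_eq_neg_iff (x a b c d : Fin m → ZMod 2) :
    (Emat x *ᵥ (stdBasis a - stdBasis b) = Emat x *ᵥ (stdBasis c - stdBasis d) ∨
        Emat x *ᵥ (stdBasis a - stdBasis b) = -(Emat x *ᵥ (stdBasis c - stdBasis d))) ↔
      x ⬝ᵥ (a + b + c + d) = 0 := by
  rw [Emat_mulVec_stdBasis_sub, Emat_mulVec_stdBasis_sub,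
    smul_eq_or_eq_neg_smul_iff_sq_eq_sq (Emat_col_zero_ne_zero x),
    ZMod.sq_neg_one_pow_val_sub_eq_iff, ← CharTwo.add_eq_zero]
  simp only [dotProduct_add, add_assoc]

theorem strongly_cospectral_iff {m : ℕ}
    (a b c d : Fin m → ZMod 2) :
    (∀ x : Fin m → ZMod 2,
        Emat x *ᵥ (stdBasis a - stdBasis b) = Emat x *ᵥ (stdBasis c - stdBasis d) ∨
        Emat x *ᵥ (stdBasis a - stdBasis b) = -(Emat x *ᵥ (stdBasis c - stdBasis d))) ↔
      a + b + c + d = 0 := by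
  simp only [Emat_mulVec_eq_or_eq_neg_iff, dotProduct_comm _ (a + b + c + d)]
  exact dotProduct_eq_zero_iff

end
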